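/- arXiv:2310.14145 — 2 statements merged into one kernel-verified Lean document; each statement's English description precedes it below -/
import Mathlib

section
/- The group G is self-replicating: for every vertex v ∈ {0,1}* and every g ∈ G there exists h ∈ G fixing the vertex v such that h|_v = g; equivalently, the section homomorphism St_G(v) → G, h ↦ h|_v, from the stabilizer of v in G to G is surjective. -/
/-!
The sections at a word `v` of elements of `G` that map the subtree below `v` to itself form a
subgroup, so for `v` of length one it suffices to lift the generators, which the wreath recursion
does explicitly: `a` is the section of `b` at `0` and of `c` at `1`, `b` that of `a d a⁻¹` and `d`,
`c` that of `a b a⁻¹` and `b`, and `d` that of `a²` at both letters. Sections at longer words are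
iterated first-level sections.
-/

namespace BVTree

/-- States of the automaton (generators, their inverses, and the identity). -/
inductive Q : Type
  | e | qa | qb | qc | qd | qa' | qb' | qc' | qd'
  deriving DecidableEq

open Q

/-- Output function of the automaton. -/
def Qout : Q → Bool → Bool
  | qa, x => !x
  | qa', x => !x
  | _, x => x

/-- Transition function of the automaton. -/
def Qtrans : Q → Bool → Q
  | qa, false => qd
  | qa, true => e
  | qb, false => qa
  | qb, true => qc
  | qc, _ => qa
  | qd, false => e
  | qd, true => qb
  | qa', false => e
  | qa', true => qd'
  | qb', false => qa'
  | qb', true => qc'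
  | qc', _ => qa'
  | qd', false => e
  | qd', true => qb'
  | e, _ => e

/-- The state corresponding to the inverse automorphism. -/
def Qinv : Q → Q
  | e => e
  | qa => qa' | qb => qb' | qc => qc' | qd => qd'
  | qa' => qa | qb' => qb | qc' => qc | qd' => qd

/-- The action of a state on finite binary words. -/
def act : Q → List Bool → List Bool
  | _, [] => []
  | q, x :: w => Qout q x :: act (Qtrans q x) w

lemma act_inv (q : Q) : ∀ w, act (Qinv q) (act q w) = w := by
  intro w
  induction w generalizing q with
  | nil => rfl
  | cons x w ih =>
    have h1 : Qout (Qinv q) (Qout q x) = x := by cases q <;> cases x <;> rfl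
    have h2 : Qtrans (Qinv q) (Qout q x) = Qinv (Qtrans q x) := by
      cases q <;> cases x <;> rfl
    simp [act, h1, h2, ih]

/-- The tree automorphism determined by a state of the automaton. -/
def aut (q : Q) : Equiv.Perm (List Bool) where
  toFun := act q
  invFun := act (Qinv q)
  left_inv := act_inv q
  right_inv := by
    intro w
    have h : Qinv (Qinv q) = q := by cases q <;> rfl
    simpa [h] using act_inv (Qinv q) w

/-- The automorphism `a`: `a(0w) = 1·d(w)`, `a(1w) = 0·w`. -/
def a : Equiv.Perm (List Bool) := aut qa
/-- The automorphism `b`: `b(0w) = 0·a(w)`, `b(1w) = 1·c(w)`. -/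
def b : Equiv.Perm (List Bool) := aut qb
/-- The automorphism `c`: `c(0w) = 0·a(w)`, `c(1w) = 1·a(w)`. -/
def c : Equiv.Perm (List Bool) := aut qc
/-- The automorphism `d`: `d(0w) = 0·w`, `d(1w) = 1·b(w)`. -/
def d : Equiv.Perm (List Bool) := aut qd

/-- The group `G` generated by `a`, `b`, `c`, `d`. -/
def G : Subgroup (Equiv.Perm (List Bool)) := Subgroup.closure {a, b, c, d}

section Sections

variable {α : Type*} (H : Subgroup (Equiv.Perm (List α)))

def sectionsAt (v : List α) : Subgroup (Equiv.Perm (List α)) where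
  carrier := {g | ∃ h ∈ H, ∀ w, h (v ++ w) = v ++ g w}
  one_mem' := ⟨1, H.one_mem, fun _ => rfl⟩
  mul_mem' := by
    rintro g₁ g₂ ⟨h₁, hh₁, e₁⟩ ⟨h₂, hh₂, e₂⟩
    exact ⟨h₁ * h₂, H.mul_mem hh₁ hh₂, fun w => by simp only [Equiv.Perm.mul_apply, e₁, e₂]⟩
  inv_mem' := by
    rintro g ⟨h, hh, e⟩
    refine ⟨h⁻¹, H.inv_mem hh, fun w => ?_⟩
    rw [Equiv.Perm.inv_eq_iff_eq, e]
    exact congrArg (v ++ ·) (g.apply_symm_apply w).symm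

theorem le_sectionsAt_of_forall_le_sectionsAt_singleton
    (hH : ∀ x, H ≤ sectionsAt H [x]) (v : List α) : H ≤ sectionsAt H v := by
  induction v with
  | nil => exact fun g hg => ⟨g, hg, fun _ => rfl⟩
  | cons x v ih =>
    intro g hg
    obtain ⟨g₁, hg₁, e₁⟩ := ih hg
    obtain ⟨h, hh, e⟩ := hH x hg₁
    exact ⟨h, hh, fun w => (e (v ++ w)).trans (congrArg (x :: ·) (e₁ w))⟩

end Sections

theorem act_e (w : List Bool) : act e w = w := by
  induction w with
  | nil => rfl
  | cons x w ih => exact congrArg (x :: ·) ih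

theorem a_cons_false (w : List Bool) : a (false :: w) = true :: d w := rfl
theorem a_cons_true (w : List Bool) : a (true :: w) = false :: w := congrArg _ (act_e w)
theorem a_inv_cons_false (w : List Bool) : a⁻¹ (false :: w) = true :: w :=
  Equiv.Perm.inv_eq_iff_eq.2 (a_cons_true w).symm
theorem b_cons_false (w : List Bool) : b (false :: w) = false :: a w := rfl
theorem b_cons_true (w : List Bool) : b (true :: w) = true :: c w := rfl
theorem c_cons (x : Bool) (w : List Bool) : c (x :: w) = x :: a w := by cases x <;> rfl
theorem d_cons_false (w : List Bool) : d (false :: w) = false :: w := congrArg _ (act_e w)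
theorem d_cons_true (w : List Bool) : d (true :: w) = true :: b w := rfl

theorem a_mem_G : a ∈ G := Subgroup.subset_closure (by simp)
theorem b_mem_G : b ∈ G := Subgroup.subset_closure (by simp)
theorem c_mem_G : c ∈ G := Subgroup.subset_closure (by simp)
theorem d_mem_G : d ∈ G := Subgroup.subset_closure (by simp)

theorem G_le_stabilizer_nil : G ≤ MulAction.stabilizer (Equiv.Perm (List Bool)) ([] : List Bool) :=
  Subgroup.closure_le _ |>.2 <| by rintro s (rfl | rfl | rfl | rfl) <;> rfl

section FirstLevelSections

attribute [local simp] a_cons_false a_cons_true a_inv_cons_false b_cons_false b_cons_true c_cons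
  d_cons_false d_cons_true Equiv.Perm.mul_apply

theorem a_mem_sectionsAt (x : Bool) : a ∈ sectionsAt G [x] := by
  cases x
  · exact ⟨b, b_mem_G, fun w => by simp⟩
  · exact ⟨c, c_mem_G, fun w => by simp⟩

theorem b_mem_sectionsAt (x : Bool) : b ∈ sectionsAt G [x] := by
  cases x
  · exact ⟨a * d * a⁻¹, G.mul_mem (G.mul_mem a_mem_G d_mem_G) (G.inv_mem a_mem_G),
      fun w => by simp⟩
  · exact ⟨d, d_mem_G, fun w => by simp⟩

theorem c_mem_sectionsAt (x : Bool) : c ∈ sectionsAt G [x] := by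
  cases x
  · exact ⟨a * b * a⁻¹, G.mul_mem (G.mul_mem a_mem_G b_mem_G) (G.inv_mem a_mem_G),
      fun w => by simp⟩
  · exact ⟨b, b_mem_G, fun w => by simp⟩

theorem d_mem_sectionsAt (x : Bool) : d ∈ sectionsAt G [x] :=
  ⟨a * a, G.mul_mem a_mem_G a_mem_G, fun w => by cases x <;> simp⟩

end FirstLevelSections

theorem G_le_sectionsAt_singleton (x : Bool) : G ≤ sectionsAt G [x] :=
  Subgroup.closure_le _ |>.2 <| by
    rintro s (rfl | rfl | rfl | rfl)
    exacts [a_mem_sectionsAt x, b_mem_sectionsAt x, c_mem_sectionsAt x, d_mem_sectionsAt x]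

/-- `G` is self-replicating: for every vertex `v` and every `g ∈ G` there is
`h ∈ G` fixing `v` whose section at `v` is `g`. -/
theorem self_replicating (v : List Bool) (g : Equiv.Perm (List Bool)) (hg : g ∈ G) :
    ∃ h ∈ G, h v = v ∧ ∀ w : List Bool, h (v ++ w) = v ++ g w := by
  obtain ⟨h, hG, hsec⟩ :=
    le_sectionsAt_of_forall_le_sectionsAt_singleton G G_le_sectionsAt_singleton v hg
  have hg_nil : g [] = [] := G_le_stabilizer_nil hg
  refine ⟨h, hG, ?_, hsec⟩
  simpa [hg_nil] using hsec []

end BVTree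
end

section
/- For every n ≥ 1, the elements b^{2^n} and c^{2^n} belong to Stab_G(3n+1) but not to Stab_G(3n+2); that is, each of b^{2^n} and c^{2^n} fixes every word of length 3n+1 but moves some word of length 3n+2. -/
namespace BVTree

open Q

/-!
In wreath recursion notation `b = (a, c)`, `c = (a, a)`, `d = (1, b)` and `a² = (d, d)`, hence
`b^{2^{n+1}} = (a^{2^{n+1}}, c^{2^{n+1}})`, `c^{2^{n+1}} = (a^{2^{n+1}}, a^{2^{n+1}})`,
`a^{2^{n+1}} = (d^{2^n}, d^{2^n})` and `d^{2^n} = (1, b^{2^n})`. An element with sections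
`(g₀, g₁)` fixes the levels up to `L + 1` iff both sections fix the levels up to `L`, so the first
level moved by `b^{2^n}` moves three levels down at each step. It starts at level `2` for `b` and `c`,
because `a` moves the root.
-/

open Equiv

def FixesUpTo (g : Perm (List Bool)) (L : ℕ) : Prop :=
  ∀ v : List Bool, v.length ≤ L → g v = v

def StabDepth (g : Perm (List Bool)) (L : ℕ) : Prop :=
  FixesUpTo g L ∧ ¬ FixesUpTo g (L + 1)

/-- `g = (g₀, g₁)`: `g` fixes the first letter and acts by `g₀`, `g₁` below `0`, `1`. -/
def HasSections (g g₀ g₁ : Perm (List Bool)) : Prop :=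
  g [] = [] ∧ (∀ w, g (false :: w) = false :: g₀ w) ∧ ∀ w, g (true :: w) = true :: g₁ w

lemma FixesUpTo.mono {g : Perm (List Bool)} {L L' : ℕ} (h : FixesUpTo g L') (hL : L ≤ L') :
    FixesUpTo g L :=
  fun v hv => h v (hv.trans hL)

lemma fixesUpTo_one (L : ℕ) : FixesUpTo 1 L :=
  fun _ _ => rfl

lemma fixesUpTo_zero_of_apply_nil {g : Perm (List Bool)} (h : g [] = []) : FixesUpTo g 0 := by
  rintro (_ | _) hv
  · exact h
  · simp at hv

lemma StabDepth.exists_length_eq_apply_ne {g : Perm (List Bool)} {L : ℕ} (h : StabDepth g L) :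
    ∃ v : List Bool, v.length = L + 1 ∧ g v ≠ v := by
  obtain ⟨v, hv, hgv⟩ : ∃ v : List Bool, v.length ≤ L + 1 ∧ g v ≠ v := by
    simpa [FixesUpTo] using h.2
  exact ⟨v, by grind [h.1 v], hgv⟩

namespace HasSections

variable {g g₀ g₁ : Perm (List Bool)}

lemma pow (h : HasSections g g₀ g₁) (k : ℕ) : HasSections (g ^ k) (g₀ ^ k) (g₁ ^ k) := by
  induction k with
  | zero => exact ⟨rfl, fun _ => rfl, fun _ => rfl⟩
  | succ k ih =>
    obtain ⟨hn, h0, h1⟩ := h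
    obtain ⟨ihn, ih0, ih1⟩ := ih
    refine ⟨?_, fun w => ?_, fun w => ?_⟩ <;>
      simp only [pow_succ, Perm.mul_apply, hn, h0, h1, ihn, ih0, ih1]

lemma fixesUpTo_succ_iff (h : HasSections g g₀ g₁) {L : ℕ} :
    FixesUpTo g (L + 1) ↔ FixesUpTo g₀ L ∧ FixesUpTo g₁ L := by
  obtain ⟨hn, h0, h1⟩ := h
  constructor
  · intro hg
    refine ⟨fun w hw => ?_, fun w hw => ?_⟩
    · simpa [h0] using hg (false :: w) (by simpa using hw)
    · simpa [h1] using hg (true :: w) (by simpa using hw)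
  · rintro ⟨hg₀, hg₁⟩ (_ | ⟨_ | _, w⟩) hv
    · exact hn
    · rw [h0, hg₀ w (by simpa using hv)]
    · rw [h1, hg₁ w (by simpa using hv)]

lemma stabDepth_succ_of_left (h : HasSections g g₀ g₁) {L : ℕ} (h₀ : StabDepth g₀ L)
    (h₁ : FixesUpTo g₁ L) : StabDepth g (L + 1) := by
  rw [StabDepth, h.fixesUpTo_succ_iff, h.fixesUpTo_succ_iff]
  exact ⟨⟨h₀.1, h₁⟩, fun h' => h₀.2 h'.1⟩

lemma stabDepth_succ_of_right (h : HasSections g g₀ g₁) {L : ℕ} (h₀ : FixesUpTo g₀ L)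
    (h₁ : StabDepth g₁ L) : StabDepth g (L + 1) := by
  rw [StabDepth, h.fixesUpTo_succ_iff, h.fixesUpTo_succ_iff]
  exact ⟨⟨h₀, h₁.1⟩, fun h' => h₁.2 h'.2⟩

end HasSections

lemma aut_e_eq_one : aut e = 1 := by
  ext v : 1
  change act e v = v
  induction v with
  | nil => rfl
  | cons x w ih => exact congrArg (x :: ·) ih

lemma hasSections_b : HasSections b a c :=
  ⟨rfl, fun _ => rfl, fun _ => rfl⟩

lemma hasSections_c : HasSections c a a :=
  ⟨rfl, fun _ => rfl, fun _ => rfl⟩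

lemma hasSections_d : HasSections d 1 b := by
  refine ⟨rfl, fun w => ?_, fun _ => rfl⟩
  change false :: aut e w = _
  rw [aut_e_eq_one]

lemma hasSections_a_sq : HasSections (a ^ 2) d d := by
  have a_true (w : List Bool) : a (true :: w) = false :: w := by
    change false :: aut e w = _
    rw [aut_e_eq_one, Perm.one_apply]
  refine ⟨rfl, fun w => a_true (d w), fun w => ?_⟩
  change a (a (true :: w)) = _
  rw [a_true]
  rfl

lemma stabDepth_a : StabDepth a 0 :=
  ⟨fixesUpTo_zero_of_apply_nil rfl, fun h => absurd (h [false] le_rfl) (by decide)⟩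

lemma stabDepth_d_pow {n L : ℕ} (h : StabDepth (b ^ 2 ^ n) L) : StabDepth (d ^ 2 ^ n) (L + 1) :=
  (hasSections_d.pow _).stabDepth_succ_of_right (by simpa using fixesUpTo_one L) h

lemma stabDepth_a_pow_succ {n L : ℕ} (h : StabDepth (b ^ 2 ^ n) L) :
    StabDepth (a ^ 2 ^ (n + 1)) (L + 2) := by
  rw [pow_succ', pow_mul]
  exact (hasSections_a_sq.pow _).stabDepth_succ_of_left (stabDepth_d_pow h) (stabDepth_d_pow h).1

lemma stabDepth_c_pow_succ {n L : ℕ} (h : StabDepth (b ^ 2 ^ n) L) :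
    StabDepth (c ^ 2 ^ (n + 1)) (L + 3) :=
  (hasSections_c.pow _).stabDepth_succ_of_left (stabDepth_a_pow_succ h) (stabDepth_a_pow_succ h).1

lemma stabDepth_b_pow_succ {n L : ℕ} (h : StabDepth (b ^ 2 ^ n) L) :
    StabDepth (b ^ 2 ^ (n + 1)) (L + 3) :=
  (hasSections_b.pow _).stabDepth_succ_of_left (stabDepth_a_pow_succ h)
    ((stabDepth_c_pow_succ h).1.mono (by omega))

lemma stabDepth_b_pow (n : ℕ) : StabDepth (b ^ 2 ^ n) (3 * n + 1) := by
  induction n with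
  | zero => simpa using hasSections_b.stabDepth_succ_of_left stabDepth_a (fixesUpTo_zero_of_apply_nil rfl)
  | succ n ih => exact stabDepth_b_pow_succ ih

lemma stabDepth_c_pow (n : ℕ) : StabDepth (c ^ 2 ^ n) (3 * n + 1) := by
  cases n with
  | zero => simpa using hasSections_c.stabDepth_succ_of_left stabDepth_a stabDepth_a.1
  | succ n => exact stabDepth_c_pow_succ (stabDepth_b_pow n)

theorem b_c_pow_level_stabilizer_general (n : ℕ) :
    (∀ v : List Bool, v.length = 3 * n + 1 → (b ^ (2 ^ n)) v = v) ∧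
    (∃ v : List Bool, v.length = 3 * n + 2 ∧ (b ^ (2 ^ n)) v ≠ v) ∧
    (∀ v : List Bool, v.length = 3 * n + 1 → (c ^ (2 ^ n)) v = v) ∧
    (∃ v : List Bool, v.length = 3 * n + 2 ∧ (c ^ (2 ^ n)) v ≠ v) := by
  have hb := stabDepth_b_pow n
  have hc := stabDepth_c_pow n
  exact ⟨fun v hv => hb.1 v hv.le, hb.exists_length_eq_apply_ne,
    fun v hv => hc.1 v hv.le, hc.exists_length_eq_apply_ne⟩

/-- for `n ≥ 1`, `b^{2^n}` and `c^{2^n}` fix level `3n+1` but move some word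
of length `3n+2`. -/
theorem b_c_pow_level_stabilizer (n : ℕ) (hn : 1 ≤ n) :
    (∀ v : List Bool, v.length = 3 * n + 1 → (b ^ (2 ^ n)) v = v) ∧
    (∃ v : List Bool, v.length = 3 * n + 2 ∧ (b ^ (2 ^ n)) v ≠ v) ∧
    (∀ v : List Bool, v.length = 3 * n + 1 → (c ^ (2 ^ n)) v = v) ∧
    (∃ v : List Bool, v.length = 3 * n + 2 ∧ (c ^ (2 ^ n)) v ≠ v) :=
  b_c_pow_level_stabilizer_general n

end BVTree
end
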